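/- arXiv:2212.03959 — 2 statements merged into one kernel-verified Lean document; each statement's English description precedes it below -/
import Mathlib

section
/- Let T be a finite tree satisfying the path condition. Then for every positive integer d, the set of vertices of T whose degree is at least d induces a connected subgraph (i.e., a subtree) of T. -/
/-!
Let `u` and `w` have degree at least `d`. If some vertex on the path from `u` to `w` had smaller
degree, there would be a path `a ⋯ u` with `d ≤ deg a` and `d ≤ deg u` whose penultimate vertex
has degree `< d`. Such a path can always be prolonged beyond `a`: since
`deg a > deg (penultimate) ≥ 1`, `a` has a neighbour `b` off the path, and `deg b < d ≤ deg u`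
would, by the path condition applied to `b a ⋯ u`, force `deg a ≤ deg (penultimate) < d`.
Hence `b a ⋯ u` is again such a path, and in a finite tree paths cannot grow forever.
-/

open SimpleGraph

/-- Degree of a vertex. -/
noncomputable def deg {V : Type*} (G : SimpleGraph V) (v : V) : ℕ :=
  Nat.card (G.neighborSet v)

/-- Sombor index. -/
noncomputable def somborIndex {V : Type*} (G : SimpleGraph V) : ℝ :=
  ∑ᶠ e ∈ G.edgeSet,
    Sym2.lift ⟨fun u v => Real.sqrt ((deg G u : ℝ) ^ 2 + (deg G v : ℝ) ^ 2),
      fun u v => by simp [add_comm]⟩ e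

/-- Multiset of degrees of non-pendant vertices. -/
noncomputable def degSeq {V : Type*} [Fintype V] (G : SimpleGraph V) : Multiset ℕ :=
  ((Finset.univ : Finset V).filter (fun v => deg G v ≠ 1)).val.map (deg G)

def pathCondition {V : Type*} (G : SimpleGraph V) : Prop :=
  ∀ ⦃u v : V⦄ (p : G.Walk u v), p.IsPath → 3 ≤ p.length →
    deg G u < deg G v → deg G (p.getVert 1) ≤ deg G (p.getVert (p.length - 1))

def attachPendants {V : Type*} (G : SimpleGraph V) (v : V) (k : ℕ) :
    SimpleGraph (V ⊕ Fin k) where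
  Adj x y :=
    match x, y with
    | Sum.inl a, Sum.inl b => G.Adj a b
    | Sum.inl a, Sum.inr _ => a = v
    | Sum.inr _, Sum.inl b => b = v
    | Sum.inr _, Sum.inr _ => False
  symm := by
    constructor
    rintro (a | i) (b | j) h
    · exact h.symm
    · exact h
    · exact h
    · exact h.elim
  loopless := by
    constructor
    rintro (a | i) h
    · exact G.loopless.irrefl a h
    · exact h

lemma one_le_deg_of_adj {V : Type*} [Finite V] {G : SimpleGraph V} {u v : V} (h : G.Adj u v) :
    1 ≤ deg G u :=
  have : Nonempty (G.neighborSet u) := ⟨⟨v, h⟩⟩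
  Nat.card_pos

lemma exists_adj_ne_of_two_le_deg {V : Type*} {G : SimpleGraph V} {u : V} (hu : 2 ≤ deg G u)
    (x : V) : ∃ b, G.Adj u b ∧ b ≠ x :=
  Set.exists_ne_of_one_lt_ncard hu x

namespace pathCondition

variable {V : Type*} [Fintype V] {G : SimpleGraph V} {d : ℕ}

lemma exists_cons_of_deg_penultimate_lt (hpc : pathCondition G) (hG : G.IsAcyclic) {a u : V}
    {p : G.Walk a u} (hp : p.IsPath) (ha : d ≤ deg G a) (hu : d ≤ deg G u)
    (hpen : deg G p.penultimate < d) :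
    ∃ (b : V) (q : G.Walk b u), q.IsPath ∧ q.length = p.length + 1 ∧ d ≤ deg G b ∧
      q.penultimate = p.penultimate := by
  have hlen : 2 ≤ p.length := by
    by_contra! h
    have : p.penultimate = a := by simp [Walk.penultimate, show p.length - 1 = 0 by omega]
    rw [this] at hpen
    omega
  have hnil : ¬p.Nil := by rw [← Walk.length_eq_zero_iff]; omega
  have hpen1 : 1 ≤ deg G p.penultimate := one_le_deg_of_adj (Walk.adj_penultimate hnil)
  obtain ⟨b, hab, hb⟩ := exists_adj_ne_of_two_le_deg (by omega : 2 ≤ deg G a) p.snd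
  have hbp : b ∉ p.support := fun h => hb (hG.eq_snd_of_adj_start hp hab h)
  have hq : (Walk.cons hab.symm p).IsPath := hp.cons hbp
  have hqpen : (Walk.cons hab.symm p).penultimate = p.penultimate :=
    Walk.penultimate_cons_of_not_nil _ _ hnil
  refine ⟨b, _, hq, rfl, ?_, hqpen⟩
  by_contra! hbd
  have := hpc _ hq (by rw [Walk.length_cons]; omega) (by omega)
  simp only [Walk.getVert_cons_succ, Walk.getVert_zero] at this
  rw [← Walk.penultimate, hqpen] at this
  omega

theorem le_deg_penultimate (hpc : pathCondition G) (hG : G.IsAcyclic) {a u : V}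
    (p : G.Walk a u) (hp : p.IsPath) (ha : d ≤ deg G a) (hu : d ≤ deg G u) :
    d ≤ deg G p.penultimate := by
  by_contra! hpen
  obtain ⟨b, q, hq, hqlen, hb, hqpen⟩ := hpc.exists_cons_of_deg_penultimate_lt hG hp ha hu hpen
  have := hpc.le_deg_penultimate hG q hq hb hu
  rw [hqpen] at this
  omega
termination_by Fintype.card V - p.length
decreasing_by have := hq.length_lt; omega

theorem le_deg_of_mem_support (hpc : pathCondition G) (hG : G.IsAcyclic) {u w : V}
    (p : G.Walk u w) (hp : p.IsPath) (hu : d ≤ deg G u) (hw : d ≤ deg G w) :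
    ∀ v ∈ p.support, d ≤ deg G v := by
  induction p with
  | nil => simpa using hu
  | @cons u b w hub q ih =>
    have hb : d ≤ deg G b := by
      simpa only [Walk.penultimate_reverse, Walk.snd_cons] using
        hpc.le_deg_penultimate hG _ hp.reverse hw hu
    simpa [hu] using ih hp.of_cons hb hw

end pathCondition

theorem highDegree_induce_connected_general {V : Type*} [Fintype V] (T : SimpleGraph V) (hT : T.IsTree)
    (hpc : pathCondition T) (d : ℕ) :
    (T.induce {v : V | d ≤ deg T v}).Preconnected := by
  rintro ⟨u, hu⟩ ⟨w, hw⟩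
  obtain ⟨p, hp, -⟩ := hT.existsUnique_path u w
  exact (p.induce _ (hpc.le_deg_of_mem_support hT.isAcyclic p hp hu hw)).reachable

/-- In a tree satisfying the path condition, for every positive integer `d`, the vertices of
degree at least `d` induce a connected subgraph (a subtree). -/
theorem highDegree_induce_connected {V : Type*} [Fintype V] (T : SimpleGraph V) (hT : T.IsTree)
    (hpc : pathCondition T) (d : ℕ) (hd : 1 ≤ d) :
    (T.induce {v : V | d ≤ deg T v}).Preconnected :=
  highDegree_induce_connected_general T hT hpc d
end

section
/- Let D = (d₁, …, d_k) with d₁ ≥ … ≥ d_k ≥ 2 be a degree sequence realizable by a tree. Then there exists a tree T with degree sequence D that minimizes the Sombor index among all trees with degree sequence D and that contains a non-pendant vertex v of degree d_k (the minimum degree among non-pendant vertices) such that all neighbors of v, except at most one, are pendant. -/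
open SimpleGraph

/-!
Among the Sombor-minimal trees with degree sequence `D`, take a tree `T` and a vertex `w` of degree
`d_k` with as few non-pendant neighbours as possible, and suppose `w` has two of them. The
non-pendant vertex `u` farthest from `w` has at most one non-pendant neighbour, so `deg u = d_k`
would contradict the choice of `w`. Otherwise `deg w < deg u`, so `u` has a pendant neighbour `s`,
and some non-pendant neighbour `r` of `w` is off the `u`–`w` path. The 2-switch replacing the edges
`us`, `rw` by `ur`, `sw` keeps a tree with the same degrees, and by concavity of the square root it
does not increase the Sombor index; but `w` has lost the non-pendant neighbour `r`.
-/

variable {V : Type*}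

lemma Real.sqrt_add_add_sqrt_add_le {A B b c : ℝ} (hB : 0 ≤ B) (hb : 0 ≤ b) (hBA : B ≤ A)
    (hbc : b ≤ c) : √(A + c) + √(B + b) ≤ √(A + b) + √(B + c) := by
  have hα := Real.sq_sqrt (by linarith : 0 ≤ A + c)
  have hβ := Real.sq_sqrt (by linarith : 0 ≤ B + c)
  have hγ := Real.sq_sqrt (by linarith : 0 ≤ A + b)
  have hδ := Real.sq_sqrt (by linarith : 0 ≤ B + b)
  have hγα : √(A + b) ≤ √(A + c) := Real.sqrt_le_sqrt (by linarith)
  have hδβ : √(B + b) ≤ √(B + c) := Real.sqrt_le_sqrt (by linarith)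
  have hδγ : √(B + b) ≤ √(A + b) := Real.sqrt_le_sqrt (by linarith)
  have := Real.sqrt_nonneg (B + b)
  -- `√(A + t) - √(B + t) = (A - B) / (√(A + t) + √(B + t))` decreases in `t`
  nlinarith [mul_le_mul_of_nonneg_left (add_le_add hγα hδβ) (sub_nonneg.2 hδγ)]

namespace SimpleGraph

variable {G : SimpleGraph V} {a b c d : V}

lemma deg_eq_ncard (G : SimpleGraph V) (v : V) : deg G v = (G.neighborSet v).ncard :=
  Nat.card_coe_set_eq _

lemma deg_eq_degree [Fintype V] (G : SimpleGraph V) [DecidableRel G.Adj] (v : V) :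
    deg G v = G.degree v := by
  rw [deg_eq_ncard, ← card_neighborSet_eq_degree, Set.ncard_eq_toFinset_card', Set.toFinset_card]

lemma one_le_deg_of_adj [Finite V] {u v : V} (h : G.Adj u v) : 1 ≤ deg G u := by
  rw [deg_eq_ncard]
  exact (Set.ncard_pos).2 ⟨v, h⟩

lemma neighborSet_eq_singleton_of_deg_eq_one {u s : V} (h : G.Adj s u) (hs : deg G s = 1) :
    G.neighborSet s = {u} := by
  obtain ⟨x, hx⟩ := Set.ncard_eq_one.1 ((deg_eq_ncard G s).symm.trans hs)
  have hu : u ∈ G.neighborSet s := h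
  rw [hx] at hu ⊢
  rw [hu]

lemma card_edgeSet_eq_of_deg_eq [Finite V] {G' : SimpleGraph V} (h : deg G' = deg G) :
    Nat.card G'.edgeSet = Nat.card G.edgeSet := by
  classical
  have := Fintype.ofFinite V
  have hsum := G.sum_degrees_eq_twice_card_edges
  have hsum' := G'.sum_degrees_eq_twice_card_edges
  simp only [← deg_eq_degree, h, edgeFinset_card, ← Nat.card_eq_fintype_card] at hsum hsum'
  omega

lemma degSeq_congr [Fintype V] {G' : SimpleGraph V} (h : deg G' = deg G) :
    degSeq G' = degSeq G := by
  rw [degSeq, degSeq, h]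

lemma mem_degSeq [Fintype V] {k : ℕ} : k ∈ degSeq G ↔ ∃ v, deg G v ≠ 1 ∧ deg G v = k := by
  simp [degSeq]

lemma IsTree.card_add_card_degSeq [Fintype V] (hG : G.IsTree) :
    Fintype.card V + Multiset.card (degSeq G) = (degSeq G).sum + 2 := by
  classical
  have hedges := hG.card_edgeFinset
  have hsum := G.sum_degrees_eq_twice_card_edges
  simp only [← deg_eq_degree] at hsum
  have hsplit := Finset.sum_filter_add_sum_filter_not Finset.univ (fun v => deg G v ≠ 1) (deg G)
  have hpendant : ∑ v ∈ Finset.univ.filter (fun v => ¬deg G v ≠ 1), deg G v =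
      (Finset.univ.filter (fun v => ¬deg G v ≠ 1)).card := by
    rw [Finset.card_eq_sum_ones]
    exact Finset.sum_congr rfl fun v hv => by simpa using hv
  have hcard := Finset.card_filter_add_card_filter_not (s := Finset.univ) (fun v => deg G v ≠ 1)
  have hseq : (degSeq G).sum = ∑ v ∈ Finset.univ.filter (fun v => deg G v ≠ 1), deg G v := rfl
  rw [hseq, degSeq, Multiset.card_map]
  simp only [Finset.card_univ] at hcard
  simp only [Finset.card_val]
  omega

lemma Connected.of_adj_reachable {G' : SimpleGraph V} (hG : G.Connected)
    (h : ∀ ⦃a b⦄, G.Adj a b → G'.Reachable a b) : G'.Connected := by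
  have := hG.nonempty
  refine ⟨fun x y => ?_⟩
  obtain ⟨p⟩ := hG x y
  induction p with
  | nil => rfl
  | cons hadj _ ih => exact (h hadj).trans ih

lemma Walk.IsPath.notMem_support_of_subsingleton_neighborSet {u w s : V} {p : G.Walk u w}
    (hp : p.IsPath) (hs : (G.neighborSet s).Subsingleton) (hsu : s ≠ u) (hsw : s ≠ w) :
    s ∉ p.support := by
  intro hmem
  obtain ⟨n, rfl, hn⟩ := Walk.mem_support_iff_exists_getVert.1 hmem
  have h0 : n ≠ 0 := by rintro rfl; simp at hsu
  have hlen : n ≠ p.length := by rintro rfl; simp at hsw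
  have hprev : G.Adj (p.getVert n) (p.getVert (n - 1)) := by
    have := p.adj_getVert_succ (i := n - 1) (by omega)
    rw [Nat.sub_add_cancel (by omega)] at this
    exact this.symm
  have hnext : G.Adj (p.getVert n) (p.getVert (n + 1)) := p.adj_getVert_succ (by omega)
  have := hp.getVert_injOn (by simp; omega) (by simp; omega) (hs hprev hnext)
  omega

lemma IsTree.exists_mem_subsingleton_neighborSet_inter [Finite V] (hG : G.IsTree) {S : Set V}
    (hS : S.Nonempty) : ∃ u ∈ S, (G.neighborSet u ∩ S).Subsingleton := by
  obtain ⟨r, hr⟩ := hS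
  obtain ⟨u, hu, hmax⟩ := S.exists_max_image (G.dist r) (Set.toFinite S) ⟨r, hr⟩
  -- by maximality of `dist r u`, every neighbour of `u` in `S` is the last step of a geodesic
  have key : ∀ x ∈ G.neighborSet u ∩ S, ∃ p : G.Walk r u, p.IsPath ∧ p.penultimate = x := by
    rintro x ⟨hux, hxS⟩
    have hdist : G.dist r u = G.dist r x + 1 := by
      have := hmax x hxS
      rcases hG.dist_eq_dist_add_one_of_adj r hux with h | h <;> omega
    obtain ⟨q, hq⟩ := (hG.connected r x).exists_walk_length_eq_dist
    exact ⟨q.concat hux.symm, Walk.isPath_of_length_eq_dist _ (by simp [hq, hdist]),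
      q.penultimate_concat _⟩
  refine ⟨u, hu, fun x₁ hx₁ x₂ hx₂ => ?_⟩
  obtain ⟨p₁, hp₁, rfl⟩ := key x₁ hx₁
  obtain ⟨p₂, hp₂, rfl⟩ := key x₂ hx₂
  have : p₁ = p₂ := congrArg Subtype.val <|
    (hG.isAcyclic.subsingleton_path r u).elim ⟨p₁, hp₁⟩ ⟨p₂, hp₂⟩
  rw [this]

lemma IsAcyclic.exists_mem_notMem_support (hG : G.IsAcyclic) {u w : V} {p : G.Walk u w}
    (hp : p.IsPath) {R : Set V} (hR : R ⊆ G.neighborSet w) (h : 1 < R.ncard) :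
    ∃ r ∈ R, r ∉ p.support := by
  -- a neighbour of `w` on the path is its penultimate vertex
  obtain ⟨x, y, hx, hy, hxy⟩ := (Set.one_lt_ncard_iff (Set.finite_of_ncard_pos (by omega))).1 h
  by_cases hx' : x ∈ p.support
  · refine ⟨y, hy, fun hy' => hxy ?_⟩
    rw [hG.eq_penultimate_of_adj_end hp (hR hx) hx', hG.eq_penultimate_of_adj_end hp (hR hy) hy']
  · exact ⟨x, hx, hx'⟩

lemma IsAcyclic.not_adj_of_notMem_support (hG : G.IsAcyclic) {u w r : V} {p : G.Walk u w}
    (hp : p.IsPath) (huw : u ≠ w) (hwr : G.Adj w r) (hr : r ∉ p.support) : ¬G.Adj u r :=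
  fun h => huw <| (hG.eq_penultimate_of_adj_end (hp.concat hr hwr) h.symm
    (p.concat hwr).start_mem_support).trans (p.penultimate_concat hwr)

def twoSwitch (G : SimpleGraph V) (a b c d : V) : SimpleGraph V :=
  G.deleteEdges {s(a, b), s(c, d)} ⊔ fromEdgeSet {s(a, c), s(b, d)}

lemma twoSwitch_swap (G : SimpleGraph V) (a b c d : V) :
    G.twoSwitch a b c d = G.twoSwitch b a d c := by
  simp only [twoSwitch, Sym2.eq_swap (a := b) (b := a), Sym2.eq_swap (a := d) (b := c),
    Set.pair_comm s(a, c)]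

lemma twoSwitch_comm (G : SimpleGraph V) (a b c d : V) :
    G.twoSwitch a b c d = G.twoSwitch c d a b := by
  simp only [twoSwitch, Set.pair_comm s(a, b), Sym2.eq_swap (a := c) (b := a),
    Sym2.eq_swap (a := d) (b := b)]

lemma neighborSet_twoSwitch_left (hab : a ≠ b) (hac : a ≠ c) (had : a ≠ d) :
    (G.twoSwitch a b c d).neighborSet a = insert c (G.neighborSet a \ {b}) := by
  ext x
  simp only [twoSwitch, mem_neighborSet, sup_adj, deleteEdges_adj, fromEdgeSet_adj,
    Set.mem_insert_iff, Set.mem_singleton_iff, Set.mem_sdiff, Sym2.eq_iff]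
  grind [G.ne_of_adj]

lemma neighborSet_twoSwitch_of_ne {x : V} (ha : x ≠ a) (hb : x ≠ b) (hc : x ≠ c) (hd : x ≠ d) :
    (G.twoSwitch a b c d).neighborSet x = G.neighborSet x := by
  ext y
  simp only [twoSwitch, mem_neighborSet, sup_adj, deleteEdges_adj, fromEdgeSet_adj,
    Set.mem_insert_iff, Set.mem_singleton_iff, Sym2.eq_iff]
  grind

lemma edgeSet_twoSwitch (hac : a ≠ c) (hbd : b ≠ d) :
    (G.twoSwitch a b c d).edgeSet = G.edgeSet \ {s(a, b), s(c, d)} ∪ {s(a, c), s(b, d)} := by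
  rw [twoSwitch, edgeSet_sup, edgeSet_deleteEdges, edgeSet_fromEdgeSet,
    sdiff_eq_left (x := ({s(a, c), s(b, d)} : Set (Sym2 V))).2]
  rw [Set.disjoint_left]
  rintro e (rfl | rfl) hdiag
  · exact hac (Sym2.mk_isDiag_iff.1 hdiag)
  · exact hbd (Sym2.mk_isDiag_iff.1 hdiag)

lemma deg_twoSwitch (hab : G.Adj a b) (hcd : G.Adj c d) (hac : ¬G.Adj a c) (hbd : ¬G.Adj b d)
    (hne : [a, b, c, d].Nodup) : deg (G.twoSwitch a b c d) = deg G := by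
  simp only [List.nodup_cons, List.mem_cons, not_or, List.not_mem_nil,
    not_false_eq_true, List.nodup_nil, and_true] at hne
  obtain ⟨⟨hab', hac', had'⟩, ⟨hbc', hbd'⟩, hcd'⟩ := hne
  ext x
  simp only [deg_eq_ncard]
  by_cases hxa : x = a
  · rw [hxa, neighborSet_twoSwitch_left hab' hac' had',
      Set.ncard_exchange (s := G.neighborSet a) hac hab]
  by_cases hxb : x = b
  · rw [hxb, twoSwitch_swap, neighborSet_twoSwitch_left (Ne.symm hab') hbd' hbc',
      Set.ncard_exchange (s := G.neighborSet b) hbd hab.symm]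
  by_cases hxc : x = c
  · rw [hxc, twoSwitch_comm, neighborSet_twoSwitch_left hcd' (Ne.symm hac') (Ne.symm hbc'),
      Set.ncard_exchange (s := G.neighborSet c) (fun h => hac h.symm) hcd]
  by_cases hxd : x = d
  · rw [hxd, twoSwitch_comm, twoSwitch_swap,
      neighborSet_twoSwitch_left (Ne.symm hcd') (Ne.symm hbd') (Ne.symm had'),
      Set.ncard_exchange (s := G.neighborSet d) (fun h => hbd h.symm) hcd.symm]
  rw [neighborSet_twoSwitch_of_ne hxa hxb hxc hxd]

lemma somborIndex_twoSwitch_le [Finite V] (hab : G.Adj a b) (hcd : G.Adj c d) (hac : ¬G.Adj a c)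
    (hbd : ¬G.Adj b d) (hne : [a, b, c, d].Nodup) (hda : deg G d ≤ deg G a)
    (hbc : deg G b ≤ deg G c) : somborIndex (G.twoSwitch a b c d) ≤ somborIndex G := by
  set f : Sym2 V → ℝ := Sym2.lift ⟨fun u v => √((deg G u : ℝ) ^ 2 + (deg G v : ℝ) ^ 2),
    fun u v => by simp [add_comm]⟩ with hf
  have hSO : somborIndex G = ∑ᶠ e ∈ G.edgeSet, f e := rfl
  have hSO' : somborIndex (G.twoSwitch a b c d) =
      ∑ᶠ e ∈ (G.twoSwitch a b c d).edgeSet, f e := by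
    simp only [somborIndex, deg_twoSwitch hab hcd hac hbd hne, hf]
  simp only [List.nodup_cons, List.mem_cons, not_or, List.not_mem_nil, not_false_eq_true,
    List.nodup_nil, and_true] at hne
  obtain ⟨⟨hab', hac', had'⟩, ⟨-, hbd'⟩, -⟩ := hne
  have hold : s(a, b) ≠ s(c, d) := by simp [hac', had']
  have hnew : s(a, c) ≠ s(b, d) := by simp [hab', had']
  have hsub : {s(a, b), s(c, d)} ⊆ G.edgeSet := by
    rintro e (rfl | rfl)
    exacts [hab, hcd]
  have hdisj : Disjoint (G.edgeSet \ {s(a, b), s(c, d)}) {s(a, c), s(b, d)} := by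
    rw [Set.disjoint_right]
    rintro e (rfl | rfl) he
    exacts [hac he.1, hbd he.1]
  rw [hSO', hSO, edgeSet_twoSwitch hac' hbd', finsum_mem_union hdisj (Set.toFinite _)
    (Set.toFinite _), finsum_mem_pair hnew]
  conv_rhs => rw [← Set.sdiff_union_of_subset hsub, finsum_mem_union Set.disjoint_sdiff_left
    (Set.toFinite _) (Set.toFinite _), finsum_mem_pair hold]
  refine add_le_add le_rfl ?_
  simp only [hf, Sym2.lift_mk]
  have key := Real.sqrt_add_add_sqrt_add_le (A := (deg G a : ℝ) ^ 2) (B := (deg G d : ℝ) ^ 2)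
    (b := (deg G b : ℝ) ^ 2) (c := (deg G c : ℝ) ^ 2) (by positivity) (by positivity)
    (by gcongr) (by gcongr)
  rw [add_comm ((deg G b : ℝ) ^ 2), add_comm ((deg G c : ℝ) ^ 2)]
  linarith

lemma IsTree.twoSwitch [Finite V] (hG : G.IsTree) (hab : G.Adj a b) (hcd : G.Adj c d)
    (hac : ¬G.Adj a c) (hbd : ¬G.Adj b d) (hne : [a, b, c, d].Nodup)
    (hreach : (G.deleteEdges {s(a, b), s(c, d)}).Reachable a d) :
    (G.twoSwitch a b c d).IsTree := by
  rw [isTree_iff_connected_and_card, card_edgeSet_eq_of_deg_eq (deg_twoSwitch hab hcd hac hbd hne)]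
  refine ⟨?_, (isTree_iff_connected_and_card.1 hG).2⟩
  simp only [List.nodup_cons, List.mem_cons, not_or, List.not_mem_nil, not_false_eq_true,
    List.nodup_nil, and_true] at hne
  obtain ⟨⟨-, hac'', -⟩, ⟨-, hbd''⟩, -⟩ := hne
  have hle : G.deleteEdges {s(a, b), s(c, d)} ≤ G.twoSwitch a b c d := le_sup_left
  have had : (G.twoSwitch a b c d).Reachable a d := hreach.mono hle
  have hac' : (G.twoSwitch a b c d).Adj a c := by simp [SimpleGraph.twoSwitch, hac'']
  have hbd' : (G.twoSwitch a b c d).Adj b d := by simp [SimpleGraph.twoSwitch, hbd'']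
  refine hG.connected.of_adj_reachable fun x y hxy => ?_
  by_cases hxy' : s(x, y) ∈ ({s(a, b), s(c, d)} : Set (Sym2 V))
  · rcases hxy' with h | h <;> rcases Sym2.eq_iff.1 h with ⟨rfl, rfl⟩ | ⟨rfl, rfl⟩
    · exact had.trans hbd'.reachable.symm
    · exact (had.trans hbd'.reachable.symm).symm
    · exact hac'.reachable.symm.trans had
    · exact (hac'.reachable.symm.trans had).symm
  · exact Adj.reachable (hle ((deleteEdges_adj ..).2 ⟨hxy, hxy'⟩))

def nonpendantNeighborSet (G : SimpleGraph V) (v : V) : Set V :=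
  G.neighborSet v ∩ {x | deg G x ≠ 1}

lemma IsTree.exists_twoSwitch_ncard_nonpendantNeighborSet_lt [Finite V] (hG : G.IsTree)
    {u w s : V} (huw : u ≠ w) (hdeg : deg G w ≤ deg G u) (hus : G.Adj u s) (hs : deg G s = 1)
    (hw : 1 < (G.nonpendantNeighborSet w).ncard) :
    ∃ G' : SimpleGraph V, G'.IsTree ∧ deg G' = deg G ∧ somborIndex G' ≤ somborIndex G ∧
      (G'.nonpendantNeighborSet w).ncard < (G.nonpendantNeighborSet w).ncard := by
  obtain ⟨p, hp⟩ := hG.connected.exists_isPath u w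
  obtain ⟨r, ⟨hwr, hr1⟩, hrp⟩ :=
    hG.isAcyclic.exists_mem_notMem_support hp Set.inter_subset_left hw
  have hNs : G.neighborSet s = {u} := neighborSet_eq_singleton_of_deg_eq_one hus.symm hs
  have hsw : s ≠ w := by
    rintro rfl
    exact hrp (((hNs ▸ hwr : r ∈ ({u} : Set V)) : r = u) ▸ p.start_mem_support)
  have hsp : s ∉ p.support :=
    hp.notMem_support_of_subsingleton_neighborSet (hNs ▸ Set.subsingleton_singleton) hus.ne' hsw
  have hur : ¬G.Adj u r := hG.isAcyclic.not_adj_of_notMem_support hp huw hwr hrp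
  have hsw' : ¬G.Adj s w := fun h => huw ((hNs ▸ h : w ∈ ({u} : Set V)) : w = u).symm
  have hne : [u, s, r, w].Nodup := by
    simp only [List.nodup_cons, List.mem_cons, not_or, List.not_mem_nil, not_false_eq_true,
      List.nodup_nil, and_true]
    exact ⟨⟨hus.ne, fun h => hrp (h ▸ p.start_mem_support), huw⟩,
      ⟨fun h => hr1 (h ▸ hs), hsw⟩, hwr.ne'⟩
  have hreach : (G.deleteEdges {s(u, s), s(r, w)}).Reachable u w := by
    refine ⟨p.toDeleteEdges _ fun e he hmem => ?_⟩
    rcases hmem with rfl | rfl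
    exacts [hsp (p.snd_mem_support_of_mem_edges he), hrp (p.fst_mem_support_of_mem_edges he)]
  have hdeg' := deg_twoSwitch hus hwr.symm hur hsw' hne
  have hNw : (G.twoSwitch u s r w).neighborSet w = insert s (G.neighborSet w \ {r}) := by
    rw [twoSwitch_comm, twoSwitch_swap]
    exact neighborSet_twoSwitch_left hwr.ne hsw.symm huw.symm
  have hnp : (G.twoSwitch u s r w).nonpendantNeighborSet w =
      G.nonpendantNeighborSet w \ {r} := by
    ext x
    simp only [nonpendantNeighborSet, hdeg', hNw, Set.mem_inter_iff, Set.mem_insert_iff,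
      Set.mem_sdiff, Set.mem_singleton_iff, Set.mem_ofPred_eq]
    grind
  refine ⟨G.twoSwitch u s r w, hG.twoSwitch hus hwr.symm hur hsw' hne hreach, hdeg',
    somborIndex_twoSwitch_le hus hwr.symm hur hsw' hne hdeg (hs ▸ one_le_deg_of_adj hwr.symm), ?_⟩
  rw [hnp]
  exact Set.ncard_sdiff_singleton_lt_of_mem ⟨hwr, hr1⟩

lemma IsTree.exists_ncard_nonpendantNeighborSet_lt [Finite V] (hG : G.IsTree) {w : V}
    (hwmin : ∀ x, deg G x ≠ 1 → deg G w ≤ deg G x)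
    (hw : 1 < (G.nonpendantNeighborSet w).ncard) :
    ∃ (G' : SimpleGraph V) (w' : V), G'.IsTree ∧ deg G' = deg G ∧
      somborIndex G' ≤ somborIndex G ∧ deg G w' = deg G w ∧
      (G'.nonpendantNeighborSet w').ncard < (G.nonpendantNeighborSet w).ncard := by
  have hdegw : 1 < deg G w := hw.trans_le <| by
    rw [deg_eq_ncard]
    exact Set.ncard_le_ncard Set.inter_subset_left
  obtain ⟨u, hu1, hu⟩ :=
    hG.exists_mem_subsingleton_neighborSet_inter (S := {x | deg G x ≠ 1}) ⟨w, hdegw.ne'⟩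
  have hu' : (G.nonpendantNeighborSet u).ncard ≤ 1 := Set.ncard_le_one_iff_subsingleton.2 hu
  obtain hwu | hwu := (hwmin u hu1).eq_or_lt
  · exact ⟨G, u, hG, rfl, le_rfl, hwu.symm, hu'.trans_lt hw⟩
  obtain ⟨s, hus, hs⟩ := Set.exists_mem_notMem_of_ncard_lt_ncard
    (s := G.nonpendantNeighborSet u) (t := G.neighborSet u) (by rw [← deg_eq_ncard]; omega)
  have hs1 : deg G s = 1 := by simpa [nonpendantNeighborSet, hus] using hs
  obtain ⟨G', hG', hdeg, hSO, hlt⟩ := hG.exists_twoSwitch_ncard_nonpendantNeighborSet_lt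
    (by rintro rfl; exact hwu.false) hwu.le hus hs1 hw
  exact ⟨G', w, hG', hdeg, hSO, rfl, hlt⟩

end SimpleGraph

def IsSomborMinimal [Fintype V] (D : Multiset ℕ) (T : SimpleGraph V) : Prop :=
  T.IsTree ∧ degSeq T = D ∧ ∀ (m : ℕ) (T' : SimpleGraph (Fin m)), T'.IsTree → degSeq T' = D →
    somborIndex T ≤ somborIndex T'

lemma IsSomborMinimal.of_deg_eq [Fintype V] {D : Multiset ℕ} {T T' : SimpleGraph V}
    (hT : IsSomborMinimal D T) (hT' : T'.IsTree) (hdeg : deg T' = deg T)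
    (hSO : somborIndex T' ≤ somborIndex T) : IsSomborMinimal D T' :=
  ⟨hT', (degSeq_congr hdeg).trans hT.2.1, fun m T'' h₁ h₂ => hSO.trans (hT.2.2 m T'' h₁ h₂)⟩

/-- Trees with a given degree sequence all have the same number of vertices, so a minimizer of the
Sombor index over the finitely many such trees on one vertex set is a global minimizer. -/
lemma exists_isSomborMinimal {D : Multiset ℕ}
    (h : ∃ (n : ℕ) (T : SimpleGraph (Fin n)), T.IsTree ∧ degSeq T = D) :
    ∃ (n : ℕ) (T : SimpleGraph (Fin n)), IsSomborMinimal D T := by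
  classical
  obtain ⟨n, T₀, hT₀, hD₀⟩ := h
  obtain ⟨T, hT, hmin⟩ := Finset.exists_min_image
    (Finset.univ.filter fun T : SimpleGraph (Fin n) => T.IsTree ∧ degSeq T = D) somborIndex
    ⟨T₀, by simp [hT₀, hD₀]⟩
  simp only [Finset.mem_filter, Finset.mem_univ, true_and] at hT hmin
  refine ⟨n, T, hT.1, hT.2, fun m T' hT' hD' => ?_⟩
  obtain rfl : m = n := by
    have hm := hT'.card_add_card_degSeq
    have hn := hT₀.card_add_card_degSeq
    rw [hD', Fintype.card_fin] at hm
    rw [hD₀, Fintype.card_fin] at hn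
    omega
  exact hmin T' ⟨hT', hD'⟩

/-- For any tree-realizable degree sequence `D = (d₁ ≥ … ≥ d_k ≥ 2)`, some tree minimizing
the Sombor index among trees with degree sequence `D` has a non-pendant vertex of degree `d_k`
all of whose neighbors, except at most one, are pendant. -/
theorem exists_minimizer_with_pendant_children (D : List ℕ) (hne : D ≠ [])
    (hsort : D.Pairwise (· ≥ ·)) (hD : ∀ d ∈ D, 2 ≤ d)
    (hreal : ∃ (n : ℕ) (T : SimpleGraph (Fin n)), T.IsTree ∧ degSeq T = ↑D) :
    ∃ (n : ℕ) (T : SimpleGraph (Fin n)), T.IsTree ∧ degSeq T = ↑D ∧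
      (∀ (m : ℕ) (T' : SimpleGraph (Fin m)), T'.IsTree → degSeq T' = ↑D →
        somborIndex T ≤ somborIndex T') ∧
      ∃ v : Fin n, deg T v = D.getLast hne ∧ deg T v ≠ 1 ∧
        ∀ w₁ w₂ : Fin n, T.Adj v w₁ → T.Adj v w₂ →
          deg T w₁ ≠ 1 → deg T w₂ ≠ 1 → w₁ = w₂ := by
  classical
  obtain ⟨n, T₀, hT₀⟩ := exists_isSomborMinimal hreal
  set d := D.getLast hne
  have hd : 2 ≤ d := hD d (List.getLast_mem hne)
  have hd_min : ∀ {T : SimpleGraph (Fin n)}, degSeq T = D → ∀ x, deg T x ≠ 1 → d ≤ deg T x :=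
    fun hT x hx => hsort.rel_getLast <| by
      rw [← Multiset.mem_coe, ← hT, mem_degSeq]
      exact ⟨x, hx, rfl⟩
  have hex : ∃ k, ∃ (T : SimpleGraph (Fin n)) (w : Fin n),
      IsSomborMinimal D T ∧ deg T w = d ∧ (T.nonpendantNeighborSet w).ncard = k := by
    obtain ⟨w, -, hw⟩ := mem_degSeq.1 (hT₀.2.1 ▸ Multiset.mem_coe.2 (List.getLast_mem hne))
    exact ⟨_, T₀, w, hT₀, hw, rfl⟩
  obtain ⟨T, w, hT, hw, hk⟩ := Nat.find_spec hex
  have hle : (T.nonpendantNeighborSet w).ncard ≤ 1 := by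
    by_contra! h
    obtain ⟨T', w', hT', hdeg, hSO, hw', hlt⟩ :=
      hT.1.exists_ncard_nonpendantNeighborSet_lt (fun x hx => hw ▸ hd_min hT.2.1 x hx) h
    exact Nat.find_min hex (hk ▸ hlt)
      ⟨T', w', hT.of_deg_eq hT' hdeg hSO, by rw [hdeg, hw', hw], rfl⟩
  exact ⟨n, T, hT.1, hT.2.1, hT.2.2, w, hw, by omega,
    fun w₁ w₂ h₁ h₂ h₁' h₂' => (Set.ncard_le_one_iff (Set.toFinite _)).1 hle ⟨h₁, h₁'⟩ ⟨h₂, h₂'⟩⟩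
end
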